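/- The fibre projection scales Nil arc length by cos θ: let θ ∈ (−π/2, π/2) with w = sin θ ≠ 0, c = cos θ, α ∈ ℝ, and x(t) = (2c/w)·sin(wt/2)·cos(wt/2 + α), y(t) = (2c/w)·sin(wt/2)·sin(wt/2 + α). Then x'(t)² + y'(t)² = cos²θ for all t, and hence for every T ≥ 0 the Euclidean arc length of the projected curve, ∫₀ᵀ √(x'(t)² + y'(t)²) dt, equals T·cos θ, i.e. cos θ times the Nil arc length of the geodesic segment from parameter 0 to T. In particular the fibre projection preserves ratios of arc lengths along a single geodesic. -/

import Mathlib

/-!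
Product-to-sum turns the projected geodesic into the circle
`t ↦ (c/w)·(sin (wt + α) - sin α, cos α - cos (wt + α))` of radius `c/|w|` and angular
speed `w`, which is traversed at the constant speed `|c| = cos θ`.
-/

open Real

theorem two_mul_sin_mul_cos_add (u α : ℝ) :
    2 * sin u * cos (u + α) = sin (2 * u + α) - sin α := by
  have h₁ : sin (2 * u + α) = sin ((u + α) + u) := by ring_nf
  have h₂ : sin α = sin ((u + α) - u) := by ring_nf
  rw [h₁, h₂, sin_add, sin_sub]
  ring

theorem two_mul_sin_mul_sin_add (u α : ℝ) :
    2 * sin u * sin (u + α) = cos α - cos (2 * u + α) := by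
  have h₁ : cos (2 * u + α) = cos ((u + α) + u) := by ring_nf
  have h₂ : cos α = cos ((u + α) - u) := by ring_nf
  rw [h₁, h₂, cos_add, cos_sub]
  ring

section Helix

variable {c w : ℝ} (α : ℝ)

theorem hasDerivAt_mul_add (t : ℝ) : HasDerivAt (fun t => w * t + α) w t := by
  simpa using ((hasDerivAt_id t).const_mul w).add_const α

theorem hasDerivAt_helix_fst (hw : w ≠ 0) (t : ℝ) :
    HasDerivAt (fun t => 2 * c / w * sin (w * t / 2) * cos (w * t / 2 + α))
      (c * cos (w * t + α)) t := by
  have hcircle : (fun t => 2 * c / w * sin (w * t / 2) * cos (w * t / 2 + α)) =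
      fun t => c / w * (sin (w * t + α) - sin α) := by
    funext t
    have h := two_mul_sin_mul_cos_add (w * t / 2) α
    rw [mul_div_cancel₀ _ two_ne_zero] at h
    rw [← h]
    ring
  rw [hcircle]
  exact ((hasDerivAt_mul_add α t).sin.sub_const _ |>.const_mul (c / w)).congr_deriv
    (by field_simp)

theorem hasDerivAt_helix_snd (hw : w ≠ 0) (t : ℝ) :
    HasDerivAt (fun t => 2 * c / w * sin (w * t / 2) * sin (w * t / 2 + α))
      (c * sin (w * t + α)) t := by
  have hcircle : (fun t => 2 * c / w * sin (w * t / 2) * sin (w * t / 2 + α)) =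
      fun t => c / w * (cos α - cos (w * t + α)) := by
    funext t
    have h := two_mul_sin_mul_sin_add (w * t / 2) α
    rw [mul_div_cancel₀ _ two_ne_zero] at h
    rw [← h]
    ring
  rw [hcircle]
  exact ((hasDerivAt_mul_add α t).cos.const_sub _ |>.const_mul (c / w)).congr_deriv
    (by field_simp)

theorem deriv_helix_sq_add_deriv_helix_sq (hw : w ≠ 0) (t : ℝ) :
    deriv (fun t => 2 * c / w * sin (w * t / 2) * cos (w * t / 2 + α)) t ^ 2 +
      deriv (fun t => 2 * c / w * sin (w * t / 2) * sin (w * t / 2 + α)) t ^ 2 = c ^ 2 := by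
  rw [(hasDerivAt_helix_fst α hw t).deriv, (hasDerivAt_helix_snd α hw t).deriv, mul_pow,
    mul_pow, ← mul_add, cos_sq_add_sin_sq, mul_one]

end Helix

theorem nil_fibre_projection_scales_arclength_general (θ α c w : ℝ)
    (hθ : θ ∈ Set.Ioo (-(π / 2)) (π / 2))
    (hw0 : w ≠ 0) (hc : c = cos θ)
    (x y : ℝ → ℝ)
    (hx : ∀ t, x t = 2 * c / w * sin (w * t / 2) * cos (w * t / 2 + α))
    (hy : ∀ t, y t = 2 * c / w * sin (w * t / 2) * sin (w * t / 2 + α)) :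
    (∀ t : ℝ, deriv x t ^ 2 + deriv y t ^ 2 = cos θ ^ 2) ∧
      ∀ T : ℝ, 0 ≤ T →
        (∫ t in (0 : ℝ)..T, Real.sqrt (deriv x t ^ 2 + deriv y t ^ 2)) = T * cos θ := by
  obtain rfl := funext hx
  obtain rfl := funext hy
  subst hc
  have hspeed := deriv_helix_sq_add_deriv_helix_sq (c := cos θ) α hw0
  refine ⟨hspeed, fun T _ => ?_⟩
  simp_rw [hspeed, sqrt_sq (cos_pos_of_mem_Ioo hθ).le,
    intervalIntegral.integral_const, sub_zero, smul_eq_mul]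

/-- **The fibre projection scales Nil arc length by `cos θ`:** for `θ ∈ (−π/2, π/2)` with
`w = sin θ ≠ 0`, `c = cos θ`, `α ∈ ℝ` and
`x(t) = (2c/w)·sin(wt/2)·cos(wt/2 + α)`, `y(t) = (2c/w)·sin(wt/2)·sin(wt/2 + α)`,
one has `x'(t)² + y'(t)² = cos²θ` for all `t`, and for every `T ≥ 0` the Euclidean arc
length `∫₀ᵀ √(x'(t)² + y'(t)²) dt` of the projected curve equals `T·cos θ`,
i.e. `cos θ` times the Nil arc length of the geodesic segment. -/
theorem nil_fibre_projection_scales_arclength (θ α c w : ℝ)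
    (hθ : θ ∈ Set.Ioo (-(π / 2)) (π / 2))
    (hw : w = sin θ) (hw0 : w ≠ 0) (hc : c = cos θ)
    (x y : ℝ → ℝ)
    (hx : ∀ t, x t = 2 * c / w * sin (w * t / 2) * cos (w * t / 2 + α))
    (hy : ∀ t, y t = 2 * c / w * sin (w * t / 2) * sin (w * t / 2 + α)) :
    (∀ t : ℝ, deriv x t ^ 2 + deriv y t ^ 2 = cos θ ^ 2) ∧
      ∀ T : ℝ, 0 ≤ T →
        (∫ t in (0 : ℝ)..T, Real.sqrt (deriv x t ^ 2 + deriv y t ^ 2)) = T * cos θ :=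
  nil_fibre_projection_scales_arclength_general θ α c w hθ hw0 hc x y hx hy
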